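/- arXiv:0911.3522 — 2 statements merged into one kernel-verified Lean document; each statement's English description precedes it below -/
import Mathlib

section
/- In any generalized ring A, every maximal proper h-ideal is prime; that is, Max(A) ⊆ spec(A). -/
open scoped Classical

noncomputable section

/-! ### Partially defined maps of finite sets -/

/-- Composition of partially defined maps of sets (`Set_•`). -/
def pcomp {X Y Z : Type} (g : Y → Option Z) (f : X → Option Y) : X → Option Z :=
  fun x => (f x).bind g

/-- The fiber of a partially defined map over a point of the target. -/
abbrev pfib {X Y : Type} (f : X → Option Y) (y : Y) : Type := {x : X // f x = some y}

/-- The fiber of the identity partial map over `x` is a singleton. -/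
def idFiberEquiv {X : Type} (x : X) : Fin 1 ≃ pfib (fun x' : X => some x') x where
  toFun _ := ⟨x, rfl⟩
  invFun _ := 0
  left_inv _ := Subsingleton.elim _ _
  right_inv p := Subtype.ext (Option.some.inj p.2).symm

/-- The fiber of the constant (total) map to the point `[1]` is everything. -/
def constFiberEquiv (X : Type) (z : Fin 1) :
    X ≃ pfib (fun _ : X => some (0 : Fin 1)) z where
  toFun x := ⟨x, congrArg some (Subsingleton.elim (0 : Fin 1) z)⟩
  invFun p := p.1
  left_inv _ := rfl
  right_inv p := rfl

/-- The fiber of (the graph of) a bijection is a singleton. -/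
def equivFiberEquiv {X Y : Type} (e : X ≃ Y) (y : Y) :
    Fin 1 ≃ pfib (fun x : X => some (e x)) y where
  toFun _ := ⟨e.symm y, congrArg some (e.apply_symm_apply y)⟩
  invFun _ := 0
  left_inv _ := Subsingleton.elim _ _
  right_inv p := Subtype.ext ((Equiv.symm_apply_eq e).mpr (Option.some.inj p.2).symm)

/-- The fiber of the map `[1] → X` with image `{x}` over `x' = x` is a singleton. -/
def pointFiberEquiv {X : Type} {x x' : X} (h : x = x') :
    Fin 1 ≃ pfib (fun _ : Fin 1 => some x) x' where
  toFun z := ⟨z, congrArg some h⟩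
  invFun p := p.1
  left_inv _ := rfl
  right_inv p := rfl

/-- Restriction of `f` to the fiber of `pcomp g f` over `z`, as a partial map into
the fiber of `g` over `z`. -/
def resMap {X Y Z : Type} (g : Y → Option Z) (f : X → Option Y) (z : Z) :
    pfib (pcomp g f) z → Option (pfib g z) :=
  fun x => (f x.1).bind fun y => if h : g y = some z then some ⟨y, h⟩ else none

/-- Identification of the fibers of the restriction `resMap g f z` with fibers of `f`. -/
def resFiberEquiv {X Y Z : Type} (g : Y → Option Z) (f : X → Option Y) (z : Z)
    (p : pfib g z) : pfib f p.1 ≃ pfib (resMap g f z) p where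
  toFun x := ⟨⟨x.1, by show (f x.1).bind g = some z; rw [x.2, Option.bind_some, p.2]⟩, by
    show (f x.1).bind _ = some p
    rw [x.2, Option.bind_some, dif_pos p.2]⟩
  invFun q := ⟨q.1.1, by
    have h := q.2
    unfold resMap at h
    rcases hf : f q.1.1 with _ | y
    · rw [hf, Option.bind_none] at h
      exact nomatch h
    · rw [hf, Option.bind_some] at h
      by_cases hg : g y = some z
      · rw [dif_pos hg] at h
        have hy : y = p.1 := congrArg Subtype.val (Option.some.inj h)
        exact congrArg some hy
      · rw [dif_neg hg] at h
        exact nomatch h⟩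
  left_inv x := Subtype.ext rfl
  right_inv q := Subtype.ext (Subtype.ext rfl)

/-! ### Fibered products -/

/-- The fibered product of two partial maps `g : Z ⇀ Y` and `f : X ⇀ Y`. -/
abbrev FP {X Y Z : Type} (g : Z → Option Y) (f : X → Option Y) : Type :=
  {p : Z × X // ∃ y : Y, g p.1 = some y ∧ f p.2 = some y}

/-- First projection of the fibered product, as a partial map. -/
def fpFst {X Y Z : Type} (g : Z → Option Y) (f : X → Option Y) : FP g f → Option Z :=
  fun p => some p.1.1

/-- Second projection of the fibered product, as a partial map. -/
def fpSnd {X Y Z : Type} (g : Z → Option Y) (f : X → Option Y) : FP g f → Option X :=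
  fun p => some p.1.2

/-- Identification of the fiber of the second projection of `Z ×_Y X` over `x`
with the fiber of `g` over `f x`. -/
def fpFiberSnd {X Y Z : Type} (g : Z → Option Y) (f : X → Option Y) {x : X} {y : Y}
    (hy : f x = some y) : pfib g y ≃ pfib (fpSnd g f) x where
  toFun w := ⟨⟨(w.1, x), ⟨y, w.2, hy⟩⟩, rfl⟩
  invFun q := ⟨q.1.1.1, by
    obtain ⟨y', hg, hf⟩ := q.1.2
    have hx : q.1.1.2 = x := Option.some.inj q.2
    rw [hx] at hf
    have hyy : y' = y := Option.some.inj (hf.symm.trans hy)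
    rw [hyy] at hg
    exact hg⟩
  left_inv w := Subtype.ext rfl
  right_inv q := by
    apply Subtype.ext
    apply Subtype.ext
    have hx : q.1.1.2 = x := Option.some.inj q.2
    exact Prod.ext rfl hx.symm

/-- Identification of the fiber of the first projection of `Z ×_Y X` over `z`
with the fiber of `f` over `g z`. -/
def fpFiberFst {X Y Z : Type} (g : Z → Option Y) (f : X → Option Y) {z : Z} {y : Y}
    (hy : g z = some y) : pfib f y ≃ pfib (fpFst g f) z where
  toFun w := ⟨⟨(z, w.1), ⟨y, hy, w.2⟩⟩, rfl⟩
  invFun q := ⟨q.1.1.2, by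
    obtain ⟨y', hg, hf⟩ := q.1.2
    have hz : q.1.1.1 = z := Option.some.inj q.2
    rw [hz] at hg
    have hyy : y' = y := Option.some.inj (hg.symm.trans hy)
    rw [hyy] at hf
    exact hf⟩
  left_inv w := Subtype.ext rfl
  right_inv q := by
    apply Subtype.ext
    apply Subtype.ext
    have hz : q.1.1.1 = z := Option.some.inj q.2
    exact Prod.ext hz.symm rfl
/-! ### Generalized rings

A generalized ring assigns to each finite set `X` a pointed set `A X`, functorially
with respect to bijections (and hence, via the operations and units, with respect to
all partial bijections of finite sets), together with operations of multiplication
`∘ : A Y × A f → A X` and contraction `( , ) : A X × A f → A Y` for every partially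
defined map `f : X ⇀ Y`, where `A f = ∏_{y ∈ Y} A (f⁻¹ y)`, and a unit `1 ∈ A [1]`,
subject to the axioms of associativity, left- and right-adjunction, left- and
right-linearity, and the unit axioms. -/

/-- The data underlying a generalized ring. -/
structure GenRingData where
  /-- the pointed set attached to a finite set `X` -/
  A : (X : Type) → [inst : Finite X] → Type
  /-- the base point `0_X ∈ A_X` -/
  zero : (X : Type) → [inst : Finite X] → A X
  /-- the unit `1 ∈ A_{[1]}` -/
  one : A (Fin 1)
  /-- functoriality with respect to bijections of finite sets -/
  map : {X Y : Type} → [inst : Finite X] → [inst' : Finite Y] → (X ≃ Y) → A X → A Y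
  /-- multiplication `∘ : A_Y × A_f → A_X` for a partially defined map `f : X ⇀ Y` -/
  mul : {X Y : Type} → [inst : Finite X] → [inst' : Finite Y] → (f : X → Option Y) →
      A Y → ((y : Y) → A (pfib f y)) → A X
  /-- contraction `( , ) : A_X × A_f → A_Y` for a partially defined map `f : X ⇀ Y` -/
  contr : {X Y : Type} → [inst : Finite X] → [inst' : Finite Y] → (f : X → Option Y) →
      A X → ((y : Y) → A (pfib f y)) → A Y

namespace GenRingData

variable (R : GenRingData)

/-- The unit family `1_{id_X} ∈ A_{id_X}`. -/
def oneId (X : Type) [Finite X] : (x : X) → R.A (pfib (fun x' : X => some x') x) :=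
  fun x => R.map (idFiberEquiv x) R.one

/-- The monoid operation `a ∘ b` on `A_{[1]}`. -/
def op (a b : R.A (Fin 1)) : R.A (Fin 1) :=
  R.mul (fun z : Fin 1 => some z) a (fun z => R.map (idFiberEquiv z) b)

/-- The `n`-fold power `a ∘ ⋯ ∘ a` in the monoid `A_{[1]}` (with `a⁰ = 1`). -/
def opPow (a : R.A (Fin 1)) : ℕ → R.A (Fin 1)
  | 0 => R.one
  | n + 1 => R.op a (opPow a n)

/-- The left action `s ∘ a` of `A_{[1]}` on `A_X` (operation (1.2.5)). -/
def lact {X : Type} [Finite X] (s : R.A (Fin 1)) (a : R.A X) : R.A X :=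
  R.mul (fun _ : X => some (0 : Fin 1)) s (fun z => R.map (constFiberEquiv X z) a)

/-- The pairing `(a, d) : A_X × A_X → A_{[1]}` (operation (1.2.6)). -/
def pair {X : Type} [Finite X] (a d : R.A X) : R.A (Fin 1) :=
  R.contr (fun _ : X => some (0 : Fin 1)) a (fun z => R.map (constFiberEquiv X z) d)

/-- The right (diagonal) action `b ∘ c` of `(A_{[1]})^X` on `A_X` (operation (1.2.7)). -/
def ract {X : Type} [Finite X] (b : R.A X) (c : X → R.A (Fin 1)) : R.A X :=
  R.mul (fun x : X => some x) b (fun x => R.map (idFiberEquiv x) (c x))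

/-- The involution `a ↦ aᵗ = (1, a)` of `A_{[1]}`. -/
def adj (a : R.A (Fin 1)) : R.A (Fin 1) := R.pair R.one a

/-- The element `(a, 1_{j_x}) ∈ A_X` obtained from `a ∈ A_{[1]}` via the
inclusion `j_x : {x} ↪ X`; for `a = 1` this is the image `1_x` of the unit. -/
def pointElt (X : Type) [Finite X] (x : X) (a : R.A (Fin 1)) : R.A X :=
  R.contr (fun _ : Fin 1 => some x) a
    (fun x' => if h : x = x' then R.map (pointFiberEquiv h) R.one else R.zero _)

/-- The extended multiplication `A_g × A_f → A_{g∘f}`, defined fiberwise. -/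
def emul {X Y Z : Type} [Finite X] [Finite Y] [Finite Z]
    (g : Y → Option Z) (f : X → Option Y)
    (c : (z : Z) → R.A (pfib g z)) (b : (y : Y) → R.A (pfib f y)) :
    (z : Z) → R.A (pfib (pcomp g f) z) :=
  fun z => R.mul (resMap g f z) (c z) (fun p => R.map (resFiberEquiv g f z p) (b p.1))

/-- The extended contraction `A_{g∘f} × A_f → A_g`, defined fiberwise. -/
def econtr {X Y Z : Type} [Finite X] [Finite Y] [Finite Z]
    (g : Y → Option Z) (f : X → Option Y)
    (a : (z : Z) → R.A (pfib (pcomp g f) z)) (b : (y : Y) → R.A (pfib f y)) :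
    (z : Z) → R.A (pfib g z) :=
  fun z => R.contr (resMap g f z) (a z) (fun p => R.map (resFiberEquiv g f z p) (b p.1))

/-- The pullback `ã ∈ A_{g̃}` of `a ∈ A_g` along the fibered product (used in
the right-linearity axiom). -/
def atilde {X Y Z : Type} [Finite X] [Finite Y] [Finite Z]
    (g : Z → Option Y) (f : X → Option Y) (a : (y : Y) → R.A (pfib g y)) :
    (x : X) → R.A (pfib (fpSnd g f) x) :=
  fun x =>
    match hfx : f x with
    | some y => R.map (fpFiberSnd g f hfx) (a y)
    | none => R.zero _

/-- The pullback `c̃ ∈ A_{f̃}` of `c ∈ A_f` along the fibered product (used in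
the right-linearity axiom). -/
def ctilde {X Y Z : Type} [Finite X] [Finite Y] [Finite Z]
    (g : Z → Option Y) (f : X → Option Y) (c : (y : Y) → R.A (pfib f y)) :
    (z : Z) → R.A (pfib (fpFst g f) z) :=
  fun z =>
    match hgz : g z with
    | some y => R.map (fpFiberFst g f hgz) (c y)
    | none => R.zero _

end GenRingData

/-- A generalized ring: the data of `GenRingData` subject to the axioms
(pointedness, functoriality, zero laws, associativity, left/right adjunction,
left/right linearity, and the unit axioms, the latter in their reduced form over
the one-point base, which is equivalent to the general form). -/
structure GenRing where
  /-- the underlying data -/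
  data : GenRingData
  /-- `A_∅ = {0}` -/
  isEmpty_eq_zero : ∀ (X : Type) [Finite X] [IsEmpty X] (a : data.A X), a = data.zero X
  /-- functoriality: identity -/
  map_refl : ∀ (X : Type) [Finite X] (a : data.A X), data.map (Equiv.refl X) a = a
  /-- functoriality: composition -/
  map_trans : ∀ {X Y Z : Type} [Finite X] [Finite Y] [Finite Z] (e : X ≃ Y) (e' : Y ≃ Z)
      (a : data.A X), data.map (e.trans e') a = data.map e' (data.map e a)
  /-- functoriality: the maps are pointed -/
  map_zero : ∀ {X Y : Type} [Finite X] [Finite Y] (e : X ≃ Y),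
      data.map e (data.zero X) = data.zero Y
  /-- `0 ∘ b = 0` -/
  mul_zero_left : ∀ {X Y : Type} [Finite X] [Finite Y] (f : X → Option Y)
      (b : (y : Y) → data.A (pfib f y)), data.mul f (data.zero Y) b = data.zero X
  /-- `a ∘ 0_f = 0` -/
  mul_zero_right : ∀ {X Y : Type} [Finite X] [Finite Y] (f : X → Option Y) (a : data.A Y),
      data.mul f a (fun y => data.zero (pfib f y)) = data.zero X
  /-- `(0, b) = 0` -/
  contr_zero_left : ∀ {X Y : Type} [Finite X] [Finite Y] (f : X → Option Y)
      (b : (y : Y) → data.A (pfib f y)), data.contr f (data.zero X) b = data.zero Y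
  /-- `(a, 0_f) = 0` -/
  contr_zero_right : ∀ {X Y : Type} [Finite X] [Finite Y] (f : X → Option Y) (a : data.A X),
      data.contr f a (fun y => data.zero (pfib f y)) = data.zero Y
  /-- associativity: `d ∘ (c ∘ b) = (d ∘ c) ∘ b` -/
  assoc : ∀ {X Y Z : Type} [Finite X] [Finite Y] [Finite Z]
      (g : Y → Option Z) (f : X → Option Y) (d : data.A Z)
      (c : (z : Z) → data.A (pfib g z)) (b : (y : Y) → data.A (pfib f y)),
      data.mul (pcomp g f) d (data.emul g f c b) = data.mul f (data.mul g d c) b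
  /-- left-adjunction: `(d, a ∘ c) = ((d, c), a)` -/
  left_adj : ∀ {X Y Z : Type} [Finite X] [Finite Y] [Finite Z]
      (g : Y → Option Z) (f : X → Option Y) (d : data.A X)
      (a : (z : Z) → data.A (pfib g z)) (c : (y : Y) → data.A (pfib f y)),
      data.contr (pcomp g f) d (data.emul g f a c) = data.contr g (data.contr f d c) a
  /-- right-adjunction: `(d ∘ c, a) = (d, (a, c))` -/
  right_adj : ∀ {X Y Z : Type} [Finite X] [Finite Y] [Finite Z]
      (g : Y → Option Z) (f : X → Option Y) (d : data.A Y)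
      (a : (z : Z) → data.A (pfib (pcomp g f) z)) (c : (y : Y) → data.A (pfib f y)),
      data.contr (pcomp g f) (data.mul f d c) a = data.contr g d (data.econtr g f a c)
  /-- left-linearity: `(d ∘ a, c) = d ∘ (a, c)` -/
  left_lin : ∀ {X Y Z : Type} [Finite X] [Finite Y] [Finite Z]
      (g : Y → Option Z) (f : X → Option Y) (d : data.A Z)
      (a : (z : Z) → data.A (pfib (pcomp g f) z)) (c : (y : Y) → data.A (pfib f y)),
      data.contr f (data.mul (pcomp g f) d a) c = data.mul g d (data.econtr g f a c)
  /-- right-linearity: `(d, c) ∘ a = (d ∘ ã, c̃)`, with `ã`, `c̃` the pullbacks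
  along the fibered product `Z ×_Y X` -/
  right_lin : ∀ {X Y Z : Type} [Finite X] [Finite Y] [Finite Z]
      (g : Z → Option Y) (f : X → Option Y) (d : data.A X)
      (a : (y : Y) → data.A (pfib g y)) (c : (y : Y) → data.A (pfib f y)),
      data.mul g (data.contr f d c) a
        = data.contr (fpFst g f) (data.mul (fpSnd g f) d (data.atilde g f a))
            (data.ctilde g f c)
  /-- unit axiom: `a ∘ 1_{id_X} = a` -/
  mul_one_id : ∀ (X : Type) [Finite X] (a : data.A X),
      data.mul (fun x : X => some x) a (data.oneId X) = a
  /-- unit axiom: `1 ∘ a = a` -/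
  one_lact : ∀ (X : Type) [Finite X] (a : data.A X), data.lact data.one a = a
  /-- unit axiom: `(a, 1_{id_X}) = a` -/
  contr_one_id : ∀ (X : Type) [Finite X] (a : data.A X),
      data.contr (fun x : X => some x) a (data.oneId X) = a
  /-- unit axiom (1.8.11): `(a, 1_f) = f_A(a)` for a bijection `f = e` -/
  map_eq_contr : ∀ {X Y : Type} [Finite X] [Finite Y] (e : X ≃ Y) (a : data.A X),
      data.contr (fun x : X => some (e x)) a
        (fun y => data.map (equivFiberEquiv e y) data.one) = data.map e a
  /-- unit axiom (1.8.11): `a ∘ 1_{fᵗ} = f_A(a)` for a bijection `f = e` -/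
  map_eq_mul : ∀ {X Y : Type} [Finite X] [Finite Y] (e : X ≃ Y) (a : data.A X),
      data.mul (fun y : Y => some (e.symm y)) a
        (fun x => data.map (equivFiberEquiv e.symm x) data.one) = data.map e a
namespace GenRing

variable (R : GenRing)

/-- An `h`-ideal of a generalized ring: a subset `I ⊆ A_{[1]}` such that
`(b ∘ c, d) ∈ I` for all finite `X`, all `b, d ∈ A_X` and all `c ∈ I^X ⊆ (A_{[1]})^X`. -/
def IsHIdeal (I : Set (R.data.A (Fin 1))) : Prop :=
  ∀ (X : Type) [Finite X], ∀ (b d : R.data.A X) (c : X → R.data.A (Fin 1)),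
    (∀ x, c x ∈ I) → R.data.pair (R.data.ract b c) d ∈ I

/-- A prime of a generalized ring: a proper `h`-ideal `P` whose complement is
closed under the multiplication of `A_{[1]}`. -/
def IsPrimeH (P : Set (R.data.A (Fin 1))) : Prop :=
  R.IsHIdeal P ∧ R.data.one ∉ P ∧
    ∀ a b : R.data.A (Fin 1), R.data.op a b ∈ P → a ∈ P ∨ b ∈ P

end GenRing

/-- The spectrum of a generalized ring: the set of its primes. -/
structure SpecG (R : GenRing) where
  /-- the underlying prime `h`-ideal -/
  I : Set (R.data.A (Fin 1))
  /-- it is prime -/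
  prime : R.IsPrimeH I

namespace GenRing

variable (R : GenRing)

/-- The basic open set `D_a = {𝔭 : a ∉ 𝔭}` of the Zariski topology. -/
def basicOpen (a : R.data.A (Fin 1)) : Set (SpecG R) := {p | a ∉ p.I}

/-- The closed set `V(s) = {𝔭 : 𝔭 ⊇ s}` of the Zariski topology. -/
def zeroLocus (s : Set (R.data.A (Fin 1))) : Set (SpecG R) := {p | s ⊆ p.I}

/-- The Zariski topology on the spectrum, generated by the basic open sets. -/
instance : TopologicalSpace (SpecG R) :=
  TopologicalSpace.generateFrom {U | ∃ a : R.data.A (Fin 1), U = R.basicOpen a}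

end GenRing

/-- A homomorphism of generalized rings: a (pointed, natural) family of maps
preserving multiplication, contraction and the unit. -/
structure GenRingHom (R S : GenRing) where
  /-- the underlying family of maps -/
  app : (X : Type) → [inst : Finite X] → R.data.A X → S.data.A X
  /-- zero is preserved -/
  app_zero : ∀ (X : Type) [Finite X], app X (R.data.zero X) = S.data.zero X
  /-- the unit is preserved -/
  app_one : app (Fin 1) R.data.one = S.data.one
  /-- naturality with respect to bijections -/
  app_map : ∀ {X Y : Type} [Finite X] [Finite Y] (e : X ≃ Y) (a : R.data.A X),
      app Y (R.data.map e a) = S.data.map e (app X a)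
  /-- multiplication is preserved -/
  app_mul : ∀ {X Y : Type} [Finite X] [Finite Y] (f : X → Option Y)
      (a : R.data.A Y) (b : (y : Y) → R.data.A (pfib f y)),
      app X (R.data.mul f a b) = S.data.mul f (app Y a) (fun y => app (pfib f y) (b y))
  /-- contraction is preserved -/
  app_contr : ∀ {X Y : Type} [Finite X] [Finite Y] (f : X → Option Y)
      (a : R.data.A X) (b : (y : Y) → R.data.A (pfib f y)),
      app Y (R.data.contr f a b) = S.data.contr f (app X a) (fun y => app (pfib f y) (b y))

namespace GenRingHom

variable {R S : GenRing} (φ : GenRingHom R S)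

theorem app_op (a b : R.data.A (Fin 1)) :
    φ.app (Fin 1) (R.data.op a b) = S.data.op (φ.app (Fin 1) a) (φ.app (Fin 1) b) := by
  unfold GenRingData.op
  rw [φ.app_mul]
  congr 1
  funext z
  rw [φ.app_map]

theorem app_ract {X : Type} [Finite X] (b : R.data.A X) (c : X → R.data.A (Fin 1)) :
    φ.app X (R.data.ract b c) = S.data.ract (φ.app X b) (fun x => φ.app (Fin 1) (c x)) := by
  unfold GenRingData.ract
  rw [φ.app_mul]
  congr 1
  funext x
  rw [φ.app_map]

theorem app_pair {X : Type} [Finite X] (a d : R.data.A X) :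
    φ.app (Fin 1) (R.data.pair a d) = S.data.pair (φ.app X a) (φ.app X d) := by
  unfold GenRingData.pair
  rw [φ.app_contr]
  congr 1
  funext z
  rw [φ.app_map]

theorem app_lact {X : Type} [Finite X] (s : R.data.A (Fin 1)) (a : R.data.A X) :
    φ.app X (R.data.lact s a) = S.data.lact (φ.app (Fin 1) s) (φ.app X a) := by
  unfold GenRingData.lact
  rw [φ.app_mul]
  congr 1
  funext z
  rw [φ.app_map]

/-- The map `spec(φ) : spec(S) → spec(R)`, `𝔮 ↦ φ_{[1]}⁻¹(𝔮)`, induced by a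
homomorphism of generalized rings `φ : R → S`. -/
def specMap (q : SpecG S) : SpecG R where
  I := φ.app (Fin 1) ⁻¹' q.I
  prime := by
    refine ⟨?_, ?_, ?_⟩
    · intro X _ b d c hc
      show φ.app (Fin 1) (R.data.pair (R.data.ract b c) d) ∈ q.I
      rw [φ.app_pair, φ.app_ract]
      exact q.prime.1 X (φ.app X b) (φ.app X d) (fun x => φ.app (Fin 1) (c x)) hc
    · show φ.app (Fin 1) R.data.one ∉ q.I
      rw [φ.app_one]
      exact q.prime.2.1
    · intro a b hab
      have h : S.data.op (φ.app (Fin 1) a) (φ.app (Fin 1) b) ∈ q.I := by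
        rw [← φ.app_op]; exact hab
      exact q.prime.2.2 _ _ h

end GenRingHom

/-- An equivalence ideal of a generalized ring: a family of equivalence relations
on the sets `A_X` respecting the operations of multiplication and contraction. -/
structure EqvIdeal (R : GenRing) where
  /-- the family of relations -/
  rel : (X : Type) → [inst : Finite X] → R.data.A X → R.data.A X → Prop
  refl : ∀ (X : Type) [Finite X] (a : R.data.A X), rel X a a
  symm : ∀ (X : Type) [Finite X] {a b : R.data.A X}, rel X a b → rel X b a
  trans : ∀ (X : Type) [Finite X] {a b c : R.data.A X}, rel X a b → rel X b c → rel X a c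
  /-- `a ∼ a'` implies `a ∘ b ∼ a' ∘ b` -/
  mul_left : ∀ {X Y : Type} [Finite X] [Finite Y] (f : X → Option Y) {a a' : R.data.A Y}
      (b : (y : Y) → R.data.A (pfib f y)),
      rel Y a a' → rel X (R.data.mul f a b) (R.data.mul f a' b)
  /-- `b ∼ b'` (componentwise) implies `a ∘ b ∼ a ∘ b'` -/
  mul_right : ∀ {X Y : Type} [Finite X] [Finite Y] (f : X → Option Y) (a : R.data.A Y)
      {b b' : (y : Y) → R.data.A (pfib f y)},
      (∀ y, rel (pfib f y) (b y) (b' y)) → rel X (R.data.mul f a b) (R.data.mul f a b')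
  /-- `a ∼ a'` implies `(a, b) ∼ (a', b)` -/
  contr_left : ∀ {X Y : Type} [Finite X] [Finite Y] (f : X → Option Y) {a a' : R.data.A X}
      (b : (y : Y) → R.data.A (pfib f y)),
      rel X a a' → rel Y (R.data.contr f a b) (R.data.contr f a' b)
  /-- `b ∼ b'` (componentwise) implies `(a, b) ∼ (a, b')` -/
  contr_right : ∀ {X Y : Type} [Finite X] [Finite Y] (f : X → Option Y) (a : R.data.A X)
      {b b' : (y : Y) → R.data.A (pfib f y)},
      (∀ y, rel (pfib f y) (b y) (b' y)) → rel Y (R.data.contr f a b) (R.data.contr f a b')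

namespace GenRing

variable (R : GenRing)

/-- The equivalence ideal `E(I)` generated by an (`h`-)ideal `I`: `a ∼ b` iff the
pair `(a, b)` belongs to every equivalence ideal containing `(i, 0)` for all `i ∈ I`. -/
def erel (I : Set (R.data.A (Fin 1))) (X : Type) [Finite X] (a b : R.data.A X) : Prop :=
  ∀ ε : EqvIdeal R, (∀ i ∈ I, ε.rel (Fin 1) i (R.data.zero (Fin 1))) → ε.rel X a b

/-- A stable `h`-ideal: an `h`-ideal `I` such that for every pair `(a, b)` in the
equivalence ideal `E(I)` generated by `I` one has `a ∈ I ↔ b ∈ I`. -/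
def IsStableHIdeal (I : Set (R.data.A (Fin 1))) : Prop :=
  R.IsHIdeal I ∧ ∀ a b : R.data.A (Fin 1), R.erel I (Fin 1) a b → (a ∈ I ↔ b ∈ I)

/-- A multiplicative subset of `A_{[1]}`: contains `1`, closed under `∘`,
and stable under the involution. -/
def IsMulSet (S : Set (R.data.A (Fin 1))) : Prop :=
  R.data.one ∈ S ∧ (∀ a ∈ S, ∀ b ∈ S, R.data.op a b ∈ S) ∧
    (∀ a, a ∈ S ↔ R.data.adj a ∈ S)

/-- `φ : R → L` presents `L` as the localization `S⁻¹R` of `R` at the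
multiplicative subset `S ⊆ A_{[1]}`: every element of `S` becomes invertible, every
element of `L` is a fraction `φ(a)/φ(s)`, and `φ(a) = φ(b)` iff `s ∘ a = s ∘ b`
for some `s ∈ S`. -/
def IsLocalizationAt (S : Set (R.data.A (Fin 1))) {L : GenRing} (φ : GenRingHom R L) : Prop :=
  (∀ s ∈ S, ∃ t : L.data.A (Fin 1),
      L.data.op t (φ.app (Fin 1) s) = L.data.one ∧
      L.data.op (φ.app (Fin 1) s) t = L.data.one) ∧
  (∀ (X : Type) [Finite X], ∀ l : L.data.A X, ∃ (a : R.data.A X) (s : R.data.A (Fin 1)),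
      s ∈ S ∧ L.data.lact (φ.app (Fin 1) s) l = φ.app X a) ∧
  (∀ (X : Type) [Finite X], ∀ a b : R.data.A X,
      φ.app X a = φ.app X b ↔ ∃ s ∈ S, R.data.lact s a = R.data.lact s b)

end GenRing

/-!
If `b ∉ 𝔪`, the colon set `{t | t ∘ b ∈ 𝔪}` is a proper `h`-ideal containing `𝔪`, hence equal
to `𝔪` by maximality; so `a ∘ b ∈ 𝔪` forces `a ∈ 𝔪`. That the colon set is an `h`-ideal rests
on the identity `(b' ∘ c, d) ∘ s = (b' ∘ (c ∘ s), d'')` for some `d''`, which follows from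
right-linearity, associativity of the diagonal action and the unit axioms; that it contains `𝔪`
rests on `x ∘ s = (x, d₀)`, an instance of right-adjunction.
-/

def pfibReindex {X X' Y : Type} (eX : X' ≃ X) (f : X → Option Y) (f' : X' → Option Y)
    (hf : ∀ x', f' x' = f (eX x')) (y : Y) : pfib f y ≃ pfib f' y where
  toFun p := ⟨eX.symm p.1, by rw [hf, eX.apply_symm_apply]; exact p.2⟩
  invFun q := ⟨eX q.1, by rw [← hf]; exact q.2⟩
  left_inv p := Subtype.ext (eX.apply_symm_apply p.1)
  right_inv q := Subtype.ext (eX.symm_apply_apply q.1)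

namespace GenRing

open GenRingData

variable (R : GenRing)

theorem map_symm_map {X Y : Type} [Finite X] [Finite Y] (e : X ≃ Y) (a : R.data.A X) :
    R.data.map e.symm (R.data.map e a) = a := by
  rw [← R.map_trans, Equiv.self_trans_symm, R.map_refl]

theorem mul_hcongr {X Y : Type} [Finite X] [Finite Y] {f g : X → Option Y} (h : f = g)
    (a : R.data.A Y) {b : (y : Y) → R.data.A (pfib f y)} {b' : (y : Y) → R.data.A (pfib g y)}
    (hb : ∀ y, HEq (b y) (b' y)) : R.data.mul f a b = R.data.mul g a b' := by
  subst h
  rw [funext fun y => eq_of_heq (hb y)]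

theorem contr_hcongr {X Y : Type} [Finite X] [Finite Y] {f g : X → Option Y} (h : f = g)
    (a : R.data.A X) {b : (y : Y) → R.data.A (pfib f y)} {b' : (y : Y) → R.data.A (pfib g y)}
    (hb : ∀ y, HEq (b y) (b' y)) : R.data.contr f a b = R.data.contr g a b' := by
  subst h
  rw [funext fun y => eq_of_heq (hb y)]

theorem map_heq_map {X Y S : Type} [Finite X] [Finite Y] [Finite S]
    {f g : X → Option Y} (h : f = g) {y : Y}
    (e₁ : S ≃ pfib f y) (e₂ : S ≃ pfib g y) (he : ∀ r, (e₁ r).1 = (e₂ r).1)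
    (v : R.data.A S) : HEq (R.data.map e₁ v) (R.data.map e₂ v) := by
  subst h
  rw [Equiv.ext fun r => Subtype.ext (he r)]

theorem resMap_graph {X X' Y : Type} (e : X' ≃ X) (f : X → Option Y) (y : Y) :
    resMap f (fun x' => some (e x')) y = fun q => some (⟨e q.1, q.2⟩ : pfib f y) := by
  funext q
  show Option.bind (some (e q.1)) _ = _
  rw [Option.bind_some, dif_pos (show f (e q.1) = some y from q.2)]

/-- The unit axiom turns `map` into a multiplication, which associativity absorbs. -/
theorem map_symm_mul {X X' Y : Type} [Finite X] [Finite X'] [Finite Y]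
    (eX : X' ≃ X) (f : X → Option Y) (f' : X' → Option Y) (hf : ∀ x', f' x' = f (eX x'))
    (a : R.data.A Y) (b : (y : Y) → R.data.A (pfib f y)) :
    R.data.map eX.symm (R.data.mul f a b)
      = R.data.mul f' a (fun y => R.data.map (pfibReindex eX f f' hf y) (b y)) := by
  obtain rfl : f' = fun x' => f (eX x') := funext hf
  rw [← R.map_eq_mul eX.symm, ← R.assoc]
  refine mul_hcongr R rfl a fun y => heq_of_eq ?_
  show R.data.mul (resMap f (fun x' => some (eX x')) y) (b y) _ = _
  rw [← R.map_eq_mul (pfibReindex eX f _ hf y) (b y)]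
  refine mul_hcongr R (resMap_graph eX f y) (b y) fun _ => ?_
  rw [← R.map_trans]
  exact map_heq_map R (resMap_graph eX f y) _ _ (fun _ => rfl) R.data.one

/-- The unit axiom turns `map` into a multiplication, which right-adjunction moves into the
second slot of the contraction. -/
theorem contr_map_symm {X X' Y : Type} [Finite X] [Finite X'] [Finite Y]
    (eX : X' ≃ X) (f : X → Option Y) (f' : X' → Option Y) (hf : ∀ x', f' x' = f (eX x'))
    (a : R.data.A X) (b : (y : Y) → R.data.A (pfib f' y)) :
    R.data.contr f' (R.data.map eX.symm a) b
      = R.data.contr f a (fun y => R.data.map (pfibReindex eX f f' hf y).symm (b y)) := by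
  obtain rfl : f' = fun x' => f (eX x') := funext hf
  rw [← R.map_eq_mul eX.symm a]
  refine (R.right_adj f (fun x' => some (eX x')) a b _).trans (congrArg _ ?_)
  funext y
  show R.data.contr (resMap f (fun x' => some (eX x')) y) (b y) _ = _
  rw [← R.map_eq_contr (pfibReindex eX f _ hf y).symm (b y)]
  refine contr_hcongr R (resMap_graph eX f y) (b y) fun _ => ?_
  rw [← R.map_trans]
  exact map_heq_map R (resMap_graph eX f y) _ _ (fun _ => rfl) R.data.one

theorem ctilde_of_eq_some {X Y Z : Type} [Finite X] [Finite Y] [Finite Z]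
    (g : Z → Option Y) (f : X → Option Y) (c : (y : Y) → R.data.A (pfib f y))
    {z : Z} {y : Y} (h : g z = some y) :
    R.data.ctilde g f c z = R.data.map (fpFiberFst g f h) (c y) := by
  unfold GenRingData.ctilde
  split
  · next y' heq =>
    obtain rfl : y' = y := Option.some.inj (heq.symm.trans h)
    rfl
  · next heq => exact absurd (heq ▸ h) (by simp)

theorem atilde_of_eq_some {X Y Z : Type} [Finite X] [Finite Y] [Finite Z]
    (g : Z → Option Y) (f : X → Option Y) (a : (y : Y) → R.data.A (pfib g y))
    {x : X} {y : Y} (h : f x = some y) :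
    R.data.atilde g f a x = R.data.map (fpFiberSnd g f h) (a y) := by
  unfold GenRingData.atilde
  split
  · next y' heq =>
    obtain rfl : y' = y := Option.some.inj (heq.symm.trans h)
    rfl
  · next heq => exact absurd (heq ▸ h) (by simp)

theorem op_eq_lact (a b : R.data.A (Fin 1)) : R.data.op a b = R.data.lact a b := by
  have hconst : (fun z : Fin 1 => some z) = fun _ => some 0 :=
    funext fun z => congrArg some (Subsingleton.elim z 0)
  exact mul_hcongr R hconst a fun _ =>
    map_heq_map R hconst _ _ (fun _ => Subsingleton.elim _ _) b

theorem one_op (b : R.data.A (Fin 1)) : R.data.op R.data.one b = b :=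
  (op_eq_lact R _ b).trans (R.one_lact _ b)

theorem exists_contr_eq_pair {X : Type} [Finite X] (h : X → Option (Fin 1))
    (hh : ∀ x, h x = some 0) (a : R.data.A X) (b : (z : Fin 1) → R.data.A (pfib h z)) :
    ∃ d : R.data.A X, R.data.contr h a b = R.data.pair a d := by
  obtain rfl : h = fun _ => some 0 := funext hh
  let e : pfib (fun _ : X => some (0 : Fin 1)) 0 ≃ X :=
    ⟨fun p => p.1, fun x => ⟨x, rfl⟩, fun _ => rfl, fun _ => rfl⟩
  refine ⟨R.data.map e (b 0), congrArg _ (funext fun z => ?_)⟩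
  obtain rfl : z = 0 := Subsingleton.elim z 0
  rw [← R.map_trans, show e.trans (constFiberEquiv X 0) = Equiv.refl _ from rfl, R.map_refl]

/-- By the unit axiom `map eQ a` is a contraction, to which right-linearity applies; all fibered
products involved are again one-point sets. -/
theorem mul_map_eq_map_op {P Q : Type} [Finite P] [Finite Q] (eP : Fin 1 ≃ P) (eQ : Fin 1 ≃ Q)
    (r : P → Option Q) (hr : ∀ p, r p = some (eQ 0)) (a b : R.data.A (Fin 1))
    (bf : (q : Q) → R.data.A (pfib r q)) (eb : (q : Q) → Fin 1 ≃ pfib r q)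
    (hbf : ∀ q, bf q = R.data.map (eb q) b) :
    R.data.mul r (R.data.map eQ a) bf = R.data.map eP (R.data.op a b) := by
  have hP : ∀ p p' : P, p = p' := fun p p' => eP.symm.injective (Subsingleton.elim _ _)
  have hFP : ∀ w w' : FP r (fun z : Fin 1 => some (eQ z)), w = w' := fun w w' =>
    Subtype.ext (Prod.ext (hP _ _) (Subsingleton.elim _ _))
  let eF : FP r (fun z : Fin 1 => some (eQ z)) ≃ P :=
    ⟨fun w => w.1.1, fun p => ⟨(p, 0), ⟨eQ 0, hr p, rfl⟩⟩, fun _ => hFP _ _, fun _ => hP _ _⟩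
  let eFP : Fin 1 ≃ FP r (fun z : Fin 1 => some (eQ z)) :=
    ⟨fun _ => eF.symm (eP 0), fun _ => 0, fun _ => Subsingleton.elim _ _, fun _ => hFP _ _⟩
  have hconst : (fun _ : FP r (fun z : Fin 1 => some (eQ z)) => some (0 : Fin 1))
      = fpSnd r fun z : Fin 1 => some (eQ z) :=
    funext fun _ => congrArg some (Subsingleton.elim _ _)
  have hbase : R.data.mul (fpSnd r fun z : Fin 1 => some (eQ z)) a
      (R.data.atilde r (fun z : Fin 1 => some (eQ z)) bf) = R.data.map eFP (R.data.op a b) := by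
    rw [op_eq_lact]
    refine Eq.trans ?_ (R.map_symm_mul eFP.symm (fun _ => some 0) _ (fun _ => rfl) a _).symm
    refine mul_hcongr R hconst.symm a fun z => ?_
    rw [atilde_of_eq_some R r (fun z : Fin 1 => some (eQ z)) bf (x := z) rfl, hbf, ← R.map_trans,
      ← R.map_trans]
    exact map_heq_map R hconst.symm _ _ (fun _ => hFP _ _) b
  rw [← R.map_eq_contr eQ a, R.right_lin, hbase]
  have hmap : R.data.map eP (R.data.op a b) = R.data.contr (fun w => some (eF w))
      (R.data.map eFP (R.data.op a b)) (fun p => R.data.map (equivFiberEquiv eF p) R.data.one) := by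
    rw [R.map_eq_contr eF, ← R.map_trans]
    exact congrArg (R.data.map · _) (Equiv.ext fun _ => hP _ _)
  rw [hmap]
  refine contr_hcongr R rfl _ fun p => ?_
  rw [ctilde_of_eq_some R r _ _ (hr p), ← R.map_trans]
  exact map_heq_map R rfl _ _ (fun _ => hFP _ _) R.data.one

theorem ract_ract {X : Type} [Finite X] (b : R.data.A X) (c e : X → R.data.A (Fin 1)) :
    R.data.ract (R.data.ract b c) e = R.data.ract b fun x => R.data.op (c x) (e x) := by
  refine (R.assoc (fun x : X => some x) (fun x : X => some x) b _ _).symm.trans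
    (congrArg _ (funext fun x => ?_))
  have hr : ∀ p, resMap (fun x : X => some x) (fun x : X => some x) x p
      = some (idFiberEquiv x 0) := fun p => by
    show Option.bind (some p.1) _ = _
    rw [Option.bind_some, dif_pos (show (fun x' : X => some x') p.1 = some x from p.2)]
    exact congrArg some (Subtype.ext (Option.some.inj p.2))
  refine mul_map_eq_map_op R (idFiberEquiv x) (idFiberEquiv x) _ hr (c x) (e x) _
    (fun q => (idFiberEquiv q.1).trans (resFiberEquiv _ _ x q)) fun ⟨x', hx'⟩ => ?_
  obtain rfl := Option.some.inj hx'
  exact (R.map_trans _ _ _).symm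

/-- Right-linearity over the fibered product `[1] ×_{[1]} X ≅ X`. -/
theorem exists_op_pair_eq_pair_ract {X : Type} [Finite X] (a d : R.data.A X)
    (s : R.data.A (Fin 1)) :
    ∃ d' : R.data.A X,
      R.data.op (R.data.pair a d) s = R.data.pair (R.data.ract a fun _ => s) d' := by
  let eW : FP (fun z : Fin 1 => some z) (fun _ : X => some (0 : Fin 1)) ≃ X :=
    ⟨fun w => w.1.2, fun x => ⟨(0, x), ⟨0, rfl, rfl⟩⟩,
      fun _ => Subtype.ext (Prod.ext (Subsingleton.elim _ _) rfl), fun _ => rfl⟩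
  have hbase : R.data.map eW (R.data.mul (fpSnd (fun z : Fin 1 => some z) fun _ : X => some 0) a
      (R.data.atilde _ _ fun z => R.data.map (idFiberEquiv z) s))
      = R.data.ract a fun _ => s := by
    refine (R.map_symm_mul eW.symm _ (fun x : X => some x) (fun _ => rfl) a _).trans
      (congrArg _ (funext fun x => ?_))
    rw [atilde_of_eq_some R _ (fun _ : X => some (0 : Fin 1)) _ (x := x) rfl, ← R.map_trans,
      ← R.map_trans]
    exact congrArg (R.data.map · s) (Equiv.ext fun _ => Subtype.ext rfl)
  have hlin : R.data.op (R.data.pair a d) s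
      = R.data.contr (fpFst (fun z : Fin 1 => some z) fun _ : X => some 0)
        (R.data.mul (fpSnd (fun z : Fin 1 => some z) fun _ : X => some 0) a
          (R.data.atilde _ _ fun z => R.data.map (idFiberEquiv z) s))
        (R.data.ctilde _ _ fun z => R.data.map (constFiberEquiv X z) d) :=
    R.right_lin _ _ a _ _
  generalize R.data.mul (fpSnd (fun z : Fin 1 => some z) fun _ : X => some (0 : Fin 1)) a _ = V
    at hbase hlin
  rw [hlin, ← map_symm_map R eW V, contr_map_symm R eW (fun _ : X => some (0 : Fin 1))
    (fpFst (fun z : Fin 1 => some z) fun _ : X => some (0 : Fin 1))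
    (fun _ => congrArg some (Subsingleton.elim _ _))]
  obtain ⟨d', hd'⟩ := exists_contr_eq_pair R _ (fun _ => rfl) (R.data.map eW V) _
  exact ⟨d', by rw [hd', hbase]⟩

theorem exists_op_pair_ract_eq_pair_ract {X : Type} [Finite X] (b : R.data.A X)
    (c : X → R.data.A (Fin 1)) (d : R.data.A X) (s : R.data.A (Fin 1)) :
    ∃ d' : R.data.A X, R.data.op (R.data.pair (R.data.ract b c) d) s
      = R.data.pair (R.data.ract b fun x => R.data.op (c x) s) d' := by
  obtain ⟨d', hd'⟩ := exists_op_pair_eq_pair_ract R (R.data.ract b c) d s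
  exact ⟨d', by rw [hd', ract_ract]⟩

/-- Right-adjunction gives `(x ∘ s, 1) = (x, (1, s))`. -/
theorem exists_op_eq_pair (x s : R.data.A (Fin 1)) :
    ∃ d : R.data.A (Fin 1), R.data.op x s = R.data.pair x d := by
  have hadj : R.data.contr (fun z : Fin 1 => some z) (R.data.op x s) (R.data.oneId (Fin 1))
      = R.data.contr (fun z : Fin 1 => some z) x
        (R.data.econtr (fun z : Fin 1 => some z) (fun z : Fin 1 => some z)
          (R.data.oneId (Fin 1)) fun z => R.data.map (idFiberEquiv z) s) :=
    R.right_adj (fun z : Fin 1 => some z) (fun z : Fin 1 => some z) x _ _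
  rw [R.contr_one_id] at hadj
  obtain ⟨d, hd⟩ := exists_contr_eq_pair R (fun z : Fin 1 => some z)
    (fun z => congrArg some (Subsingleton.elim z 0)) x _
  exact ⟨d, hadj.trans hd⟩

variable {R}

theorem IsHIdeal.op_mem {m : Set (R.data.A (Fin 1))} (hm : R.IsHIdeal m)
    {x : R.data.A (Fin 1)} (hx : x ∈ m) (s : R.data.A (Fin 1)) : R.data.op x s ∈ m := by
  obtain ⟨d, hd⟩ := exists_op_eq_pair R x s
  rw [hd, ← one_op R x]
  exact hm (Fin 1) R.data.one d (fun _ => x) fun _ => hx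

theorem IsHIdeal.setOf_op_mem {m : Set (R.data.A (Fin 1))} (hm : R.IsHIdeal m)
    (s : R.data.A (Fin 1)) : R.IsHIdeal {t | R.data.op t s ∈ m} := by
  intro X _ b d c hc
  obtain ⟨d', hd'⟩ := exists_op_pair_ract_eq_pair_ract R b c d s
  show R.data.op _ s ∈ m
  rw [hd']
  exact hm X b d' _ hc

end GenRing

/-- **Maximal proper `h`-ideals are prime.**  In any generalized ring, every maximal
proper `h`-ideal is a prime; that is, `Max(A) ⊆ spec(A)`. -/
theorem maximal_hIdeal_isPrime (R : GenRing) (m : Set (R.data.A (Fin 1)))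
    (hm : R.IsHIdeal m) (hproper : R.data.one ∉ m)
    (hmax : ∀ b : Set (R.data.A (Fin 1)), R.IsHIdeal b → R.data.one ∉ b → m ⊆ b → b = m) :
    R.IsPrimeH m := by
  refine ⟨hm, hproper, fun a b hab => or_iff_not_imp_right.mpr fun hb => ?_⟩
  have hcolon : {t | R.data.op t b ∈ m} = m :=
    hmax _ (hm.setOf_op_mem b) (by rwa [Set.mem_ofPred_eq, R.one_op])
      fun x hx => hm.op_mem hx b
  rw [← hcolon]
  exact hab
end
end

section
/- For any generalized ring A, the topological space spec(A) is sober: the map 𝔭 ↦ V(𝔭) = closure of {𝔭} is a bijection from spec(A) onto the set of irreducible closed subsets of spec(A); equivalently, every irreducible closed subset of spec(A) has a unique generic point. -/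
open scoped Classical

noncomputable section

/-! The generic point of an irreducible closed set `C ⊆ spec(A)` is the intersection `J` of the
primes in `C`. It is prime: if `a ∘ b ∈ J` with `a, b ∉ J`, the basic opens `D_a`, `D_b` both
meet `C`, hence so does `D_a ∩ D_b` by irreducibility, and a prime there contains `a ∘ b` but
neither `a` nor `b`. Conversely a prime `𝔮 ⊇ J` lies in `C = closure C`: every subbasic open `D_a`
around `𝔮` has `a ∉ J`, so it meets `C`, and irreducibility passes this on to finite
intersections. Uniqueness holds because `spec(A)` is T0, as `𝔭 ⤳ 𝔮 ↔ 𝔭 ⊆ 𝔮`. -/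

section GenerateFrom

variable {X : Type*} [t : TopologicalSpace X] {B : Set (Set X)}

theorem specializes_iff_of_eq_generateFrom (ht : t = .generateFrom B) {x y : X} :
    x ⤳ y ↔ ∀ U ∈ B, y ∈ U → x ∈ U := by
  refine ⟨fun h U hU => h.mem_open (ht ▸ TopologicalSpace.isOpen_generateFrom_of_mem hU),
    fun h => specializes_iff_forall_open.2 fun U hU => ?_⟩
  subst ht
  induction hU with
  | basic V hV => exact h V hV
  | univ => exact fun _ => trivial
  | inter V W _ _ ihV ihW => exact fun hy => ⟨ihV hy.1, ihW hy.2⟩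
  | sUnion S _ ih =>
    rintro ⟨V, hV, hyV⟩
    exact ⟨V, hV, ih V hV hyV⟩

theorem IsIrreducible.mem_closure_of_eq_generateFrom (ht : t = .generateFrom B) {C : Set X}
    (hC : IsIrreducible C) {y : X} (hy : ∀ U ∈ B, y ∈ U → (C ∩ U).Nonempty) :
    y ∈ closure C := by
  have isOpen_of_generateOpen {U : Set X} (hU : TopologicalSpace.GenerateOpen B U) : IsOpen U :=
    ht ▸ hU
  refine mem_closure_iff.2 fun U hU hyU => Set.inter_comm C U ▸ ?_
  rw [ht] at hU
  induction hU with
  | basic V hV => exact hy V hV hyU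
  | univ => simpa using hC.nonempty
  | inter V W hV hW ihV ihW =>
    exact hC.isPreirreducible V W (isOpen_of_generateOpen hV) (isOpen_of_generateOpen hW)
      (ihV hyU.1) (ihW hyU.2)
  | sUnion S _ ih =>
    obtain ⟨V, hV, hyV⟩ := hyU
    obtain ⟨p, hpC, hpV⟩ := ih V hV hyV
    exact ⟨p, hpC, V, hV, hpV⟩

end GenerateFrom

theorem SpecG.I_injective {R : GenRing} : Function.Injective (SpecG.I (R := R)) := by
  rintro ⟨I, _⟩ ⟨J, _⟩ rfl
  rfl

namespace GenRing

variable {R : GenRing}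

theorem isOpen_basicOpen (a : R.data.A (Fin 1)) : IsOpen (R.basicOpen a) :=
  TopologicalSpace.isOpen_generateFrom_of_mem ⟨a, rfl⟩

theorem specializes_iff_subset {p q : SpecG R} : p ⤳ q ↔ p.I ⊆ q.I := by
  rw [specializes_iff_of_eq_generateFrom rfl]
  simp only [Set.mem_ofPred_eq, forall_exists_index, forall_eq_apply_imp_iff, basicOpen]
  exact forall_congr' fun a => not_imp_not

instance : T0Space (SpecG R) :=
  (t0Space_iff_inseparable _).2 fun _ _ h => SpecG.I_injective <|
    (specializes_iff_subset.1 h.specializes).antisymm (specializes_iff_subset.1 h.specializes')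

theorem isHIdeal_iInter {ι : Sort*} {I : ι → Set (R.data.A (Fin 1))}
    (hI : ∀ i, R.IsHIdeal (I i)) : R.IsHIdeal (⋂ i, I i) :=
  fun X _ b d c hc => Set.mem_iInter.2 fun i => hI i X b d c fun x => Set.mem_iInter.1 (hc x) i

def vanishingIdeal (C : Set (SpecG R)) : Set (R.data.A (Fin 1)) := ⋂ p ∈ C, p.I

theorem mem_vanishingIdeal {C : Set (SpecG R)} {a : R.data.A (Fin 1)} :
    a ∈ vanishingIdeal C ↔ ∀ p ∈ C, a ∈ p.I := by
  simp [vanishingIdeal]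

theorem vanishingIdeal_subset {C : Set (SpecG R)} {p : SpecG R} (hp : p ∈ C) :
    vanishingIdeal C ⊆ p.I :=
  fun _ ha => mem_vanishingIdeal.1 ha p hp

theorem inter_basicOpen_nonempty_iff {C : Set (SpecG R)} {a : R.data.A (Fin 1)} :
    (C ∩ R.basicOpen a).Nonempty ↔ a ∉ vanishingIdeal C := by
  simp [Set.Nonempty, mem_vanishingIdeal, basicOpen]

theorem isPrimeH_vanishingIdeal {C : Set (SpecG R)} (hC : IsIrreducible C) :
    R.IsPrimeH (vanishingIdeal C) := by
  refine ⟨isHIdeal_iInter fun p => isHIdeal_iInter fun _ => p.prime.1, ?_, ?_⟩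
  · obtain ⟨p, hp⟩ := hC.nonempty
    exact fun h => p.prime.2.1 (vanishingIdeal_subset hp h)
  · intro a b hab
    by_contra! hne
    obtain ⟨q, hqC, hqa, hqb⟩ := hC.isPreirreducible _ _ (isOpen_basicOpen a)
      (isOpen_basicOpen b) (inter_basicOpen_nonempty_iff.2 hne.1)
      (inter_basicOpen_nonempty_iff.2 hne.2)
    exact (q.prime.2.2 a b (vanishingIdeal_subset hqC hab)).elim hqa hqb

instance : QuasiSober (SpecG R) where
  sober {C} hC hcl := by
    refine ⟨⟨vanishingIdeal C, isPrimeH_vanishingIdeal hC⟩,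
      isGenericPoint_iff_specializes.2 fun q => specializes_iff_subset.trans
        ⟨fun hq => hcl.closure_subset (hC.mem_closure_of_eq_generateFrom rfl ?_),
          vanishingIdeal_subset⟩⟩
    rintro _ ⟨a, rfl⟩ ha
    exact inter_basicOpen_nonempty_iff.2 fun haC => ha (hq haC)

end GenRing

/-- **`spec` of a generalized ring is sober.**  Every irreducible closed subset of the
spectrum of a generalized ring has a unique generic point; equivalently,
`𝔭 ↦ closure {𝔭} = V(𝔭)` is a bijection onto the irreducible closed subsets. -/
theorem specG_sober (R : GenRing) (C : Set (SpecG R))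
    (hirr : IsIrreducible C) (hcl : IsClosed C) :
    ∃! p : SpecG R, closure {p} = C :=
  ⟨hirr.genericPoint, hirr.closure_genericPoint hcl,
    fun _ hp => IsGenericPoint.eq hp (hirr.isGenericPoint_genericPoint hcl)⟩

end
end
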